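/- Let d, d_ν ≥ 1, let f : ℝ^{d_ν} → ℝ^d be Δ-Lipschitz (Euclidean norms), let w ∈ [0,1), c > 0, y ∈ ℝ^d, and for ν ∈ ℝ^{d_ν} let μ_ν = N(w·y + (1-w)·f(ν), cI_d). Fix ν, ν' ∈ ℝ^{d_ν} and an integer P ≥ 0, and define the P+2 equally spaced points ν*_j = ν + (j/(P+1))(ν' - ν) for j = 0, 1, …, P+1 on the segment from ν to ν'. Then for every j ∈ {1, …, P+1}, χ²(μ_{ν*_j} ‖ μ_{ν*_{j-1}}) + 1 ≤ exp(c^{-1}(1-w)²Δ²‖ν - ν'‖²/(P+1)²). In particular, linear tempering with P intermediate points reduces the exponent in the χ²-divergence bound between consecutive conditional posteriors by the factor (P+1)². -/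

import Mathlib

/-!
For Gaussians with common covariance `c I`, the parallelogram law in the exponent gives
`q₂² / q₁ = exp (‖m₂ - m₁‖² / c) · q₃` with `q₃` the density of `N(2 m₂ - m₁, c I)`, hence
`χ²(N(m₂, c I) ‖ N(m₁, c I)) + 1 = ∫ q₂² / q₁ = exp (‖m₂ - m₁‖² / c)`. Consecutive tempered
posteriors have means differing by `(1 - w) (f ν*_j - f ν*_{j-1})`, and consecutive points are
`‖ν - ν'‖ / (P + 1)` apart, so the Lipschitz bound on `f` gives the exponent.
-/

open MeasureTheory Real

/-- Density of the isotropic Gaussian measure `N(m, c I_d)` on `ℝ^d`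
with respect to Lebesgue measure. -/
noncomputable def gaussDensity (d : ℕ) (c : ℝ) (m θ : EuclideanSpace ℝ (Fin d)) : ℝ :=
  (2 * π * c) ^ (-(d : ℝ) / 2) * Real.exp (-‖θ - m‖ ^ 2 / (2 * c))

/-- χ²-divergence between isotropic Gaussians `N(m₂, c I_d)` and `N(m₁, c I_d)`,
defined as `∫ (q₂/q₁ - 1)² q₁`. -/
noncomputable def gaussChiSq (d : ℕ) (c : ℝ) (m₂ m₁ : EuclideanSpace ℝ (Fin d)) : ℝ :=
  ∫ θ, (gaussDensity d c m₂ θ / gaussDensity d c m₁ θ - 1) ^ 2 * gaussDensity d c m₁ θ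

section GaussDensity

variable {d : ℕ} {c : ℝ}

lemma integral_gaussDensity (hc : 0 < c) (m : EuclideanSpace ℝ (Fin d)) :
    ∫ θ, gaussDensity d c m θ = 1 := by
  have hexp : ∫ θ : EuclideanSpace ℝ (Fin d), rexp (-‖θ - m‖ ^ 2 / (2 * c))
      = (2 * π * c) ^ ((d : ℝ) / 2) := by
    have hquad (v : EuclideanSpace ℝ (Fin d)) : -‖v‖ ^ 2 / (2 * c) = -(2 * c)⁻¹ * ‖v‖ ^ 2 := by
      ring
    simp only [hquad]
    rw [integral_sub_right_eq_self (fun θ => rexp (-(2 * c)⁻¹ * ‖θ‖ ^ 2)) m,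
      GaussianFourier.integral_rexp_neg_mul_sq_norm (by positivity), finrank_euclideanSpace_fin]
    congr 1
    field_simp
  simp only [gaussDensity]
  rw [integral_const_mul, hexp, ← rpow_add (by positivity), neg_div, neg_add_cancel, rpow_zero]

lemma integrable_gaussDensity (hc : 0 < c) (m : EuclideanSpace ℝ (Fin d)) :
    Integrable (gaussDensity d c m) :=
  .of_integral_ne_zero (by simp [integral_gaussDensity hc m])

lemma gaussDensity_sq (m₂ m₁ θ : EuclideanSpace ℝ (Fin d)) :
    gaussDensity d c m₂ θ ^ 2 = rexp (‖m₂ - m₁‖ ^ 2 / c) *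
      gaussDensity d c ((2 : ℝ) • m₂ - m₁) θ * gaussDensity d c m₁ θ := by
  have hpar := parallelogram_law_with_norm ℝ (θ - m₂) (m₂ - m₁)
  rw [sub_add_sub_cancel, show θ - m₂ - (m₂ - m₁) = θ - ((2 : ℝ) • m₂ - m₁) by
    rw [two_smul]; abel] at hpar
  have hexp : 2 * (-‖θ - m₂‖ ^ 2 / (2 * c)) = ‖m₂ - m₁‖ ^ 2 / c
      + -‖θ - ((2 : ℝ) • m₂ - m₁)‖ ^ 2 / (2 * c) + -‖θ - m₁‖ ^ 2 / (2 * c) := by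
    simp only [div_eq_mul_inv, mul_inv]
    linear_combination (2⁻¹ * c⁻¹) * hpar
  simp only [gaussDensity]
  rw [mul_pow, ← exp_nat_mul, Nat.cast_ofNat, hexp, exp_add, exp_add]
  ring

lemma gaussChiSq_add_one (hc : 0 < c) (m₂ m₁ : EuclideanSpace ℝ (Fin d)) :
    gaussChiSq d c m₂ m₁ + 1 = rexp (‖m₂ - m₁‖ ^ 2 / c) := by
  have hq₁ (θ) : gaussDensity d c m₁ θ ≠ 0 := by unfold gaussDensity; positivity
  have hexpand (θ) : (gaussDensity d c m₂ θ / gaussDensity d c m₁ θ - 1) ^ 2 *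
      gaussDensity d c m₁ θ = rexp (‖m₂ - m₁‖ ^ 2 / c) * gaussDensity d c ((2 : ℝ) • m₂ - m₁) θ
        - 2 * gaussDensity d c m₂ θ + gaussDensity d c m₁ θ := by
    field_simp [hq₁ θ]
    linear_combination gaussDensity_sq m₂ m₁ θ
  have hq_int := integrable_gaussDensity (d := d) hc
  have hdiff_int : Integrable fun θ ↦ rexp (‖m₂ - m₁‖ ^ 2 / c) *
      gaussDensity d c ((2 : ℝ) • m₂ - m₁) θ - 2 * gaussDensity d c m₂ θ :=
    ((hq_int _).const_mul _).sub ((hq_int _).const_mul _)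
  rw [gaussChiSq, funext hexpand, integral_add hdiff_int (hq_int _),
    integral_sub ((hq_int _).const_mul _) ((hq_int _).const_mul _), integral_const_mul,
    integral_const_mul, integral_gaussDensity hc, integral_gaussDensity hc,
    integral_gaussDensity hc]
  ring

end GaussDensity

lemma gaussChiSq_posterior_add_one_le {d : ℕ} {E : Type*} [SeminormedAddCommGroup E]
    {f : E → EuclideanSpace ℝ (Fin d)} {Δ c : ℝ} {a b : E}
    (hab : ‖f a - f b‖ ≤ Δ * ‖a - b‖) (w : ℝ) (hc : 0 < c) (y : EuclideanSpace ℝ (Fin d)) :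
    gaussChiSq d c (w • y + (1 - w) • f a) (w • y + (1 - w) • f b) + 1
      ≤ rexp (c⁻¹ * (1 - w) ^ 2 * Δ ^ 2 * ‖a - b‖ ^ 2) := by
  rw [gaussChiSq_add_one hc, add_sub_add_left_eq_sub, ← smul_sub, norm_smul, norm_eq_abs,
    exp_le_exp, mul_pow, sq_abs]
  have hsq : ‖f a - f b‖ ^ 2 ≤ Δ ^ 2 * ‖a - b‖ ^ 2 := by
    simpa only [mul_pow] using pow_le_pow_left₀ (norm_nonneg _) hab 2
  calc (1 - w) ^ 2 * ‖f a - f b‖ ^ 2 / c ≤ (1 - w) ^ 2 * (Δ ^ 2 * ‖a - b‖ ^ 2) / c := by gcongr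
    _ = _ := by ring

lemma norm_add_smul_sub_add_smul {E : Type*} [SeminormedAddCommGroup E] [NormedSpace ℝ E]
    (x v : E) (s t : ℝ) : ‖(x + s • v) - (x + t • v)‖ = |s - t| * ‖v‖ := by
  rw [add_sub_add_left_eq_sub, ← sub_smul, norm_smul, norm_eq_abs]

theorem gauss_chiSq_tempered_le_general (d dν : ℕ)
    (f : EuclideanSpace ℝ (Fin dν) → EuclideanSpace ℝ (Fin d)) (Δ : ℝ)
    (hf : ∀ ν ν', ‖f ν - f ν'‖ ≤ Δ * ‖ν - ν'‖)
    (w : ℝ) (c : ℝ) (hc : 0 < c)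
    (y : EuclideanSpace ℝ (Fin d))
    (ν ν' : EuclideanSpace ℝ (Fin dν)) (P : ℕ)
    (νstar : ℕ → EuclideanSpace ℝ (Fin dν))
    (hνstar : ∀ j, j ≤ P + 1 →
      νstar j = ν + ((j : ℝ) / ((P : ℝ) + 1)) • (ν' - ν)) :
    ∀ j, 1 ≤ j → j ≤ P + 1 →
      gaussChiSq d c (w • y + (1 - w) • f (νstar j)) (w • y + (1 - w) • f (νstar (j - 1))) + 1
        ≤ Real.exp (c⁻¹ * (1 - w) ^ 2 * Δ ^ 2 * ‖ν - ν'‖ ^ 2 / ((P : ℝ) + 1) ^ 2) := by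
  intro j hj1 hj2
  have hstep : ‖νstar j - νstar (j - 1)‖ = ‖ν - ν'‖ / ((P : ℝ) + 1) := by
    have hgap : (j : ℝ) / ((P : ℝ) + 1) - ((j - 1 : ℕ) : ℝ) / ((P : ℝ) + 1) = ((P : ℝ) + 1)⁻¹ := by
      rw [Nat.cast_sub hj1]
      field_simp
      ring
    rw [hνstar j hj2, hνstar (j - 1) (by omega), norm_add_smul_sub_add_smul, hgap,
      abs_of_pos (by positivity), norm_sub_rev, inv_mul_eq_div]
  calc _ ≤ rexp (c⁻¹ * (1 - w) ^ 2 * Δ ^ 2 * ‖νstar j - νstar (j - 1)‖ ^ 2) :=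
        gaussChiSq_posterior_add_one_le (hf _ _) w hc y
    _ = _ := by rw [hstep, div_pow, mul_div_assoc]

/-- Linear tempering: augmenting the segment from `ν` to `ν'` with `P`
equally spaced intermediate points `ν*_j = ν + (j/(P+1))(ν' - ν)`, the χ²-divergence between
consecutive conditional posteriors `μ_{ν*_j} = N(w y + (1-w) f(ν*_j), c I_d)` satisfies
`χ²(μ_{ν*_j} ‖ μ_{ν*_{j-1}}) + 1 ≤ exp(c⁻¹ (1-w)² Δ² ‖ν - ν'‖² / (P+1)²)`. -/
theorem gauss_chiSq_tempered_le (d dν : ℕ) (hd : 1 ≤ d) (hdν : 1 ≤ dν)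
    (f : EuclideanSpace ℝ (Fin dν) → EuclideanSpace ℝ (Fin d)) (Δ : ℝ)
    (hf : ∀ ν ν', ‖f ν - f ν'‖ ≤ Δ * ‖ν - ν'‖)
    (w : ℝ) (hw0 : 0 ≤ w) (hw1 : w < 1) (c : ℝ) (hc : 0 < c)
    (y : EuclideanSpace ℝ (Fin d))
    (ν ν' : EuclideanSpace ℝ (Fin dν)) (P : ℕ)
    (νstar : ℕ → EuclideanSpace ℝ (Fin dν))
    (hνstar : ∀ j, j ≤ P + 1 →
      νstar j = ν + ((j : ℝ) / ((P : ℝ) + 1)) • (ν' - ν)) :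
    ∀ j, 1 ≤ j → j ≤ P + 1 →
      gaussChiSq d c (w • y + (1 - w) • f (νstar j)) (w • y + (1 - w) • f (νstar (j - 1))) + 1
        ≤ Real.exp (c⁻¹ * (1 - w) ^ 2 * Δ ^ 2 * ‖ν - ν'‖ ^ 2 / ((P : ℝ) + 1) ^ 2) :=
  gauss_chiSq_tempered_le_general d dν f Δ hf w c hc y ν ν' P νstar hνstar
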